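/- arXiv:0909.2541 — 5 statements merged into one kernel-verified Lean document; each statement's English description precedes it below -/
import Mathlib

section
/- Let m > 1 and K = Q_2(ζ_{2^m}). Then 5^{2^{m−2}} ∈ N_{K|Q_2}(o_K^×); indeed N_{K|Q_2}(2+i) = 5^{2^{m−2}}, where i = ζ_{2^m}^{2^{m−2}} is a primitive 4th root of unity in K. -/
/-!
Since `i ^ 2 = -1`, the element `2 + i` is a root of `X ^ 2 - 4 X + 5`, which is irreducible over
`ℚ_2` because `-1` is not a square modulo `4`. Hence `N_{ℚ_2(i)|ℚ_2}(2 + i) = 5`, and by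
transitivity of the norm `N_{K|ℚ_2}(2 + i) = 5 ^ [K : ℚ_2(i)]`. The `2 ^ m`-th cyclotomic polynomial
is Eisenstein at `2` after the shift `X ↦ X + 1`, so `[K : ℚ_2] = 2 ^ (m - 1)` and
`[K : ℚ_2(i)] = 2 ^ (m - 2)`. Finally `(2 + i) (2 - i) = 5` is a unit of `ℤ_2` and both factors are
integral, so `2 + i` is a unit of `o_K`.
-/

open Polynomial Module IntermediateField

theorem Algebra.norm_eq_coeff_zero_minpoly_pow {K L : Type*} [Field K] [Field L] [Algebra K L]
    [FiniteDimensional K L] (x : L) :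
    Algebra.norm K x = ((-1) ^ (minpoly K x).natDegree * (minpoly K x).coeff 0) ^
      (finrank K L / (minpoly K x).natDegree) := by
  have hx : IsIntegral K x := .of_finite K x
  have hdeg : finrank K K⟮x⟯ = (minpoly K x).natDegree := adjoin.finrank hx
  have htower : finrank K L / (minpoly K x).natDegree = finrank K⟮x⟯ L :=
    Nat.div_eq_of_eq_mul_right (hdeg ▸ finrank_pos) (hdeg ▸ (finrank_mul_finrank K K⟮x⟯ L).symm)
  have hgen : Algebra.norm K (AdjoinSimple.gen K x) =
      (-1) ^ (minpoly K x).natDegree * (minpoly K x).coeff 0 := by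
    rw [← IntermediateField.adjoin.powerBasis_gen hx, PowerBasis.norm_gen_eq_coeff_zero_minpoly,
      IntermediateField.adjoin.powerBasis_gen, minpoly_gen, IntermediateField.adjoin.powerBasis_dim]
  rw [norm_eq_norm_adjoin, hgen, htower]

theorem integralClosure.isUnit_of_mul_eq_algebraMap {R L : Type*} [CommRing R] [CommRing L]
    [Algebra R L] {x y : L} (hx : IsIntegral R x) (hy : IsIntegral R y) {r : R} (hr : IsUnit r)
    (h : x * y = algebraMap R L r) : IsUnit (⟨x, hx⟩ : integralClosure R L) := by
  refine isUnit_of_mul_isUnit_left (y := ⟨y, hy⟩) ?_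
  have : (⟨x, hx⟩ * ⟨y, hy⟩ : integralClosure R L) = algebraMap R _ r := Subtype.ext h
  exact this ▸ hr.map _

namespace PadicInt

variable {p : ℕ} [Fact p.Prime]

theorem intCast_mem_span_p_pow_iff (a : ℤ) (n : ℕ) :
    (a : ℤ_[p]) ∈ Ideal.span {(p : ℤ_[p])} ^ n ↔ a ∈ Ideal.span {(p : ℤ)} ^ n := by
  rw [Ideal.span_singleton_pow, Ideal.span_singleton_pow, Ideal.mem_span_singleton,
    Ideal.mem_span_singleton, pow_p_dvd_int_iff]

theorem intCast_mem_span_p_iff (a : ℤ) :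
    (a : ℤ_[p]) ∈ Ideal.span {(p : ℤ_[p])} ↔ a ∈ Ideal.span {(p : ℤ)} := by
  simpa using intCast_mem_span_p_pow_iff a 1

theorem isEisensteinAt_map_intCast {f : ℤ[X]} (hf : f.IsEisensteinAt (Ideal.span {(p : ℤ)})) :
    (f.map (Int.castRingHom ℤ_[p])).IsEisensteinAt (Ideal.span {(p : ℤ_[p])}) := by
  have hlc : Int.castRingHom ℤ_[p] f.leadingCoeff ≠ 0 := fun h0 =>
    hf.leading ((intCast_mem_span_p_iff _).1 (by simp_all))
  refine ⟨?_, fun hn => ?_, ?_⟩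
  · rw [leadingCoeff_map_of_leadingCoeff_ne_zero _ hlc, eq_intCast, intCast_mem_span_p_iff]
    exact hf.leading
  · rw [natDegree_map_of_leadingCoeff_ne_zero _ hlc] at hn
    rw [coeff_map, eq_intCast, intCast_mem_span_p_iff]
    exact hf.mem hn
  · rw [coeff_map, eq_intCast, intCast_mem_span_p_pow_iff]
    exact hf.notMem

end PadicInt

namespace Padic

variable {p : ℕ} [Fact p.Prime]

theorem irreducible_map_of_isEisensteinAt {f : ℤ[X]} (hm : f.Monic) (hdeg : 0 < f.natDegree)
    (hf : f.IsEisensteinAt (Ideal.span {(p : ℤ)})) :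
    Irreducible (f.map (Int.castRingHom ℚ_[p])) := by
  have hprime : (Ideal.span {(p : ℤ_[p])}).IsPrime :=
    (Ideal.span_singleton_prime (NeZero.ne _)).2 PadicInt.prime_p
  have hm' := hm.map (Int.castRingHom ℤ_[p])
  have hirr := (PadicInt.isEisensteinAt_map_intCast hf).irreducible hprime hm'.isPrimitive
    (by rwa [hm.natDegree_map])
  rw [← RingHom.ext_int ((algebraMap ℤ_[p] ℚ_[p]).comp (Int.castRingHom ℤ_[p]))
    (Int.castRingHom ℚ_[p]), ← Polynomial.map_map]
  exact hm'.irreducible_iff_irreducible_map_fraction_map.1 hirr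

theorem irreducible_cyclotomic_prime_pow (n : ℕ) :
    Irreducible (cyclotomic (p ^ (n + 1)) ℚ_[p]) := by
  have hm : ((cyclotomic (p ^ (n + 1)) ℤ).comp (X + 1)).Monic :=
    (cyclotomic.monic _ ℤ).comp (monic_X_add_C 1)
      (by rw [← C_1, natDegree_X_add_C]; exact one_ne_zero)
  have hirr := irreducible_map_of_isEisensteinAt hm (by
      rw [natDegree_comp, ← C_1, natDegree_X_add_C, mul_one, natDegree_cyclotomic]
      exact Nat.totient_pos.2 (pow_pos (Fact.out : p.Prime).pos _))
    (cyclotomic_prime_pow_comp_X_add_one_isEisensteinAt p n)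
  rw [Polynomial.map_comp, map_cyclotomic, Polynomial.map_add, map_X, Polynomial.map_one, ← C_1,
    ← taylor_apply, ← coe_taylorEquiv] at hirr
  exact (MulEquiv.irreducible_iff (taylorEquiv (1 : ℚ_[p]))).1 hirr

theorem sq_ne_neg_one (y : ℚ_[2]) : y ^ 2 ≠ -1 := by
  intro h
  have hy : ‖y‖ ≤ 1 := by
    have h1 : ‖y‖ ^ 2 = 1 := by rw [← norm_pow, h, norm_neg, norm_one]
    rw [(pow_eq_one_iff_of_nonneg (norm_nonneg y) two_ne_zero).1 h1]
  have hz : (show ℤ_[2] from ⟨y, hy⟩) ^ 2 = -1 := Subtype.ext (by push_cast; exact h)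
  have hmod := congrArg (PadicInt.toZModPow 2) hz
  rw [map_pow, map_neg, map_one] at hmod
  exact (by decide : ∀ a : ZMod (2 ^ 2), a ^ 2 ≠ -1) _ hmod

theorem irreducible_X_sq_sub_four_mul_X_add_five :
    Irreducible (X ^ 2 - C 4 * X + C 5 : ℚ_[2][X]) := by
  have hdeg : (X ^ 2 - C 4 * X + C 5 : ℚ_[2][X]).natDegree = 2 := by compute_degree!
  refine irreducible_of_degree_le_three_of_not_isRoot (by simp [hdeg]) fun y hy => ?_
  refine sq_ne_neg_one (y - 2) ?_
  simp only [IsRoot, eval_add, eval_sub, eval_mul, eval_pow, eval_X, eval_C] at hy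
  linear_combination hy

theorem norm_two_add_of_sq_eq_neg_one {L : Type*} [Field L] [Algebra ℚ_[2] L]
    [FiniteDimensional ℚ_[2] L] {i : L} (hi : i ^ 2 = -1) :
    Algebra.norm ℚ_[2] (2 + i) = 5 ^ (finrank ℚ_[2] L / 2) := by
  have hmin : minpoly ℚ_[2] (2 + i) = X ^ 2 - C 4 * X + C 5 := by
    refine (minpoly.eq_of_irreducible_of_monic irreducible_X_sq_sub_four_mul_X_add_five ?_
      (by monicity!)).symm
    simp only [map_add, map_sub, map_pow, map_mul, aeval_X, map_ofNat]
    linear_combination hi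
  have hdeg : (X ^ 2 - C 4 * X + C 5 : ℚ_[2][X]).natDegree = 2 := by compute_degree!
  rw [Algebra.norm_eq_coeff_zero_minpoly_pow, hmin, hdeg]
  simp

end Padic

theorem stmt3 (m : ℕ) (hm : 1 < m)
    (K : Type*) [Field K] [Algebra ℚ_[2] K] [FiniteDimensional ℚ_[2] K]
    (ncyc : ℕ+) (hncyc : (ncyc : ℕ) = 2 ^ m) [IsCyclotomicExtension {(ncyc : ℕ)} ℚ_[2] K]
    (ζ : K) (hζ : IsPrimitiveRoot ζ (2 ^ m)) :
    letI : Algebra ℤ_[2] K :=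
      ((algebraMap ℚ_[2] K).comp (algebraMap ℤ_[2] ℚ_[2])).toAlgebra
    Algebra.norm ℚ_[2] ((2 : K) + ζ ^ (2 ^ (m - 2))) = 5 ^ (2 ^ (m - 2)) ∧
      ∃ u : (integralClosure ℤ_[2] K)ˣ,
        Algebra.norm ℚ_[2] ((↑(↑u : integralClosure ℤ_[2] K) : K)) = 5 ^ (2 ^ (m - 2)) := by
  let : Algebra ℤ_[2] K := ((algebraMap ℚ_[2] K).comp (algebraMap ℤ_[2] ℚ_[2])).toAlgebra
  obtain ⟨n, rfl⟩ : ∃ n, m = n + 2 := ⟨m - 2, by omega⟩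
  rw [Nat.add_sub_cancel]
  set i := ζ ^ 2 ^ n
  have hi : IsPrimitiveRoot i 4 := hζ.pow (by positivity) (pow_add 2 n 2)
  have hi2 : i ^ 2 = -1 := (hi.pow (by norm_num) (by norm_num : 4 = 2 * 2)).eq_neg_one_of_two_right
  have hfin : finrank ℚ_[2] K = 2 ^ n * 2 := by
    rw [IsCyclotomicExtension.finrank K (hncyc ▸ Padic.irreducible_cyclotomic_prime_pow (n + 1)),
      hncyc, Nat.totient_prime_pow_succ Nat.prime_two, pow_succ, Nat.add_one_sub_one, mul_one]
  have hnorm : Algebra.norm ℚ_[2] (2 + i) = 5 ^ 2 ^ n := by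
    rw [Padic.norm_two_add_of_sq_eq_neg_one hi2, hfin, Nat.mul_div_cancel _ two_pos]
  have h5 : IsUnit (5 : ℤ_[2]) :=
    PadicInt.isUnit_iff.2 (by exact_mod_cast PadicInt.norm_natCast_eq_one_iff.2 (by norm_num))
  have hi_int : IsIntegral ℤ_[2] i := .of_pow four_pos (hi.pow_eq_one ▸ isIntegral_one)
  have h2_int : IsIntegral ℤ_[2] (2 : K) := by
    simpa using isIntegral_natCast (R := ℤ_[2]) (B := K) 2
  have hunit := integralClosure.isUnit_of_mul_eq_algebraMap (h2_int.add hi_int) (h2_int.sub hi_int)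
    h5 (by rw [map_ofNat]; linear_combination -hi2)
  exact ⟨hnorm, hunit.unit, hnorm⟩
end

section
/- Let p > 1, e_1 > 0 be integers, q > 1 real, e = e_1(p−1). For i ∈ [1,e] let a(i) = ⌊(i−1)/(p−1)⌋, t_i = i + a(i), n_i = p(q^i − q^{i−1})/(p−1), and set t_{e+1} = p·e_1, n_{e+1} = p·q^e. Then (p−1)·Σ_{i=1}^{e+1} (t_i + 1)·n_i = p·( (e_1 p² + p − 1)·q^e − (q^e − 1)/(q − 1) − (q^e − 1)/(q^{p−1} − 1) ). -/
/-!
Split the indices `1, …, e` into `e₁` blocks of length `p - 1`, on each of which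
`a i = ⌊(i - 1)/(p - 1)⌋` is constant. On a block the sum is an arithmetic progression against
consecutive differences of powers of `q`, which Abel summation evaluates in closed form; summing
the blocks by induction on `e₁` gives the identity.
-/

open Finset

section

variable {R : Type*} [CommRing R]

theorem sub_one_mul_sum_range_add_mul_pow_succ_sub_pow (x c : R) (m : ℕ) :
    (x - 1) * ∑ r ∈ range m, (c + r) * (x ^ (r + 1) - x ^ r) =
      (x - 1) * ((c + m) * x ^ m - c) - (x ^ (m + 1) - x) := by
  induction m with
  | zero => simp
  | succ m ih =>
    rw [sum_range_succ, mul_add, ih]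
    push_cast
    ring

theorem sum_range_block_add_div_add_two_mul_pow_sub {d : ℕ} (hd : 0 < d) (x : R) (k : ℕ) :
    ∑ r ∈ range d, ((k * d + r + (k * d + r) / d + 2 : ℕ) : R) *
        (x ^ (k * d + r + 1) - x ^ (k * d + r)) =
      x ^ (k * d) * ∑ r ∈ range d, (((k * (d + 1) + 2 : ℕ) : R) + r) * (x ^ (r + 1) - x ^ r) := by
  rw [mul_sum]
  refine sum_congr rfl fun r hr => ?_
  have hdiv : (k * d + r) / d = k := by
    rw [Nat.mul_comm, Nat.mul_add_div hd, Nat.div_eq_of_lt (mem_range.mp hr), Nat.add_zero]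
  rw [hdiv]
  push_cast
  ring

theorem sum_range_mul_add_div_add_two_mul_pow_sub {d : ℕ} (hd : 0 < d) (x : R) (k : ℕ) :
    (x - 1) * (x ^ d - 1) *
        ∑ j ∈ range (k * d), ((j + j / d + 2 : ℕ) : R) * (x ^ (j + 1) - x ^ j) =
      (x - 1) * (x ^ d - 1) * (k * (d + 1)) * x ^ (k * d)
        - (x ^ d - 1) * (x ^ (k * d) - 1) - (x - 1) * (x ^ (k * d) - 1) := by
  induction k with
  | zero => simp
  | succ k ih =>
    rw [Nat.succ_mul, sum_range_add, sum_range_block_add_div_add_two_mul_pow_sub hd, mul_add, ih]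
    have hblock := sub_one_mul_sum_range_add_mul_pow_succ_sub_pow x ((k * (d + 1) + 2 : ℕ) : R) d
    push_cast at hblock ⊢
    linear_combination (x ^ d - 1) * x ^ (k * d) * hblock

end

theorem stmt7_general (p e₁ : ℕ) (hp : 1 < p) (q : ℝ) (hq : 1 < q) :
    ∀ (e : ℕ), e = e₁ * (p - 1) →
    ∀ (a t : ℕ → ℕ) (n : ℕ → ℝ),
      (∀ i, a i = (i - 1) / (p - 1)) →
      (∀ i, i ≤ e → t i = i + a i) → t (e + 1) = p * e₁ →
      (∀ i, i ≤ e → n i = p * (q ^ i - q ^ (i - 1)) / (p - 1)) → n (e + 1) = p * q ^ e →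
      (p - 1 : ℝ) * ∑ i ∈ Finset.Icc 1 (e + 1), ((t i : ℝ) + 1) * n i =
        p * (((e₁ : ℝ) * p ^ 2 + p - 1) * q ^ e - (q ^ e - 1) / (q - 1)
          - (q ^ e - 1) / (q ^ (p - 1) - 1)) := by
  rintro e rfl a t n ha ht hte hn hne
  obtain ⟨d, rfl⟩ : ∃ d, p = d + 1 := ⟨p - 1, by omega⟩
  have hd : 0 < d := by omega
  simp only [Nat.add_sub_cancel] at ha ht hte hn hne ⊢
  have hd' : (d : ℝ) ≠ 0 := by positivity
  have hq1 : q - 1 ≠ 0 := by linarith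
  have hqd : q ^ d - 1 ≠ 0 := sub_ne_zero.mpr (one_lt_pow₀ hq hd.ne').ne'
  have hsum : ∑ i ∈ Icc 1 (e₁ * d), ((t i : ℝ) + 1) * n i =
      (d + 1) / d * ∑ j ∈ range (e₁ * d), ((j + j / d + 2 : ℕ) : ℝ) * (q ^ (j + 1) - q ^ j) := by
    rw [mul_sum, ← Ico_add_one_right_eq_Icc, sum_Ico_eq_sum_range, Nat.add_sub_cancel]
    refine sum_congr rfl fun j hj => ?_
    have hj : 1 + j ≤ e₁ * d := by have := mem_range.mp hj; omega
    rw [ht _ hj, ha, hn _ hj, Nat.add_sub_cancel_left]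
    push_cast
    ring
  rw [sum_Icc_succ_top (by omega), hsum, hte, hne]
  have key := sum_range_mul_add_div_add_two_mul_pow_sub hd q e₁
  push_cast at key ⊢
  field_simp
  linear_combination (d : ℝ) * key

theorem stmt7 (p e₁ : ℕ) (hp : 1 < p) (he : 0 < e₁) (q : ℝ) (hq : 1 < q) :
    ∀ (e : ℕ), e = e₁ * (p - 1) →
    ∀ (a t : ℕ → ℕ) (n : ℕ → ℝ),
      (∀ i, a i = (i - 1) / (p - 1)) →
      (∀ i, i ≤ e → t i = i + a i) → t (e + 1) = p * e₁ →
      (∀ i, i ≤ e → n i = p * (q ^ i - q ^ (i - 1)) / (p - 1)) → n (e + 1) = p * q ^ e →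
      (p - 1 : ℝ) * ∑ i ∈ Finset.Icc 1 (e + 1), ((t i : ℝ) + 1) * n i =
        p * (((e₁ : ℝ) * p ^ 2 + p - 1) * q ^ e - (q ^ e - 1) / (q - 1)
          - (q ^ e - 1) / (q ^ (p - 1) - 1)) :=
  stmt7_general p e₁ hp q hq
end

section
/- Let K be a local field of characteristic p with maximal ideal 𝔭, and let ℘(x) = x^p − x. Then for every integer n > 0, 𝔭^{−n} ∩ ℘(K) = ℘(𝔭^{−⌊n/p⌋}). -/
/-!
If `y` has negative order `a`, the leading term of `y ^ p` sits at `p • a < a`, so it is not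
cancelled by `y` and `℘ y = y ^ p - y` has order exactly `p • a`; if `y` has nonnegative order then
so has `℘ y`. Hence `℘ y` has order `≥ -n` iff `y` has order `≥ -⌊n / p⌋`, which gives both
inclusions at once.
-/

namespace HahnSeries

theorem coe_le_orderTop_iff_forall {Γ R : Type*} [LinearOrder Γ] [Zero R] {x : R⟦Γ⟧} {g : Γ} :
    (g : WithTop Γ) ≤ x.orderTop ↔ ∀ j : Γ, j < g → x.coeff j = 0 := by
  simp only [le_orderTop_iff_forall, WithTop.coe_lt_coe]

variable {Γ R : Type*} [AddCommMonoid Γ] [LinearOrder Γ] [IsOrderedCancelAddMonoid Γ] [Ring R]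

theorem orderTop_pow_sub_self_nonneg {y : R⟦Γ⟧} (p : ℕ) (hy : 0 ≤ y.orderTop) :
    0 ≤ (y ^ p - y).orderTop :=
  le_trans (le_min (le_trans (nsmul_nonneg hy p) orderTop_nsmul_le_orderTop_pow) hy)
    min_orderTop_le_orderTop_sub

variable [NoZeroDivisors R]

theorem orderTop_pow_of_ne_zero {y : R⟦Γ⟧} (hy : y ≠ 0) (p : ℕ) :
    (y ^ p).orderTop = (p • y.order : Γ) := by
  rw [← order_eq_orderTop_of_ne_zero (pow_ne_zero p hy), order_pow]

theorem orderTop_pow_sub_self_of_order_neg {y : R⟦Γ⟧} {p : ℕ} (hp : 1 < p) (hy : y.order < 0) :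
    (y ^ p - y).orderTop = (p • y.order : Γ) := by
  have hy0 : y ≠ 0 := by
    rintro rfl
    simp at hy
  have hlt : p • y.order < y.order :=
    calc p • y.order = (p - 1) • y.order + y.order := by
          rw [← succ_nsmul, Nat.sub_add_cancel hp.le]
      _ < y.order := add_lt_of_neg_left _ (nsmul_neg hy (by omega))
  rw [← orderTop_pow_of_ne_zero hy0]
  apply orderTop_sub
  rwa [orderTop_pow_of_ne_zero hy0, ← order_eq_orderTop_of_ne_zero hy0, WithTop.coe_lt_coe]

end HahnSeries

theorem Int.neg_le_natCast_mul_iff {p : ℕ} (hp : 0 < p) (n : ℕ) (a : ℤ) :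
    -(n : ℤ) ≤ p * a ↔ -((n / p : ℕ) : ℤ) ≤ a := by
  rw [neg_le (a := ((n / p : ℕ) : ℤ)), Int.natCast_div, Int.le_ediv_iff_mul_le (by omega), neg_mul,
    neg_le, mul_comm]

namespace LaurentSeries

open HahnSeries

theorem neg_le_orderTop_pow_sub_self_iff {R : Type*} [Ring R] [NoZeroDivisors R] {p : ℕ}
    (hp : 1 < p) (n : ℕ) (y : LaurentSeries R) :
    ((-n : ℤ) : WithTop ℤ) ≤ (y ^ p - y).orderTop ↔
      ((-(n / p : ℕ) : ℤ) : WithTop ℤ) ≤ y.orderTop := by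
  rcases eq_or_ne y 0 with rfl | hy0
  · simp [zero_pow (by omega : p ≠ 0)]
  rw [← order_eq_orderTop_of_ne_zero hy0, WithTop.coe_le_coe]
  rcases lt_or_ge y.order 0 with hneg | hnonneg
  · rw [orderTop_pow_sub_self_of_order_neg hp hneg, WithTop.coe_le_coe, nsmul_eq_mul]
    exact Int.neg_le_natCast_mul_iff (by omega) n _
  · have hpos := orderTop_pow_sub_self_nonneg p (zero_le_orderTop_iff.2 hnonneg)
    have hn : ((-n : ℤ) : WithTop ℤ) ≤ 0 :=
      WithTop.coe_le_coe.2 (neg_nonpos.2 (Int.natCast_nonneg n))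
    exact iff_of_true (hn.trans hpos) ((neg_nonpos.2 (Int.natCast_nonneg _)).trans hnonneg)

end LaurentSeries

open HahnSeries LaurentSeries in
theorem stmt10_general (p : ℕ) (hp : p.Prime) (k : Type*) [Field k]
    (n : ℕ) :
    {x : LaurentSeries k | ∀ i : ℤ, i < -(n : ℤ) → x.coeff i = 0} ∩
        Set.range (fun y : LaurentSeries k => y ^ p - y) =
      (fun y : LaurentSeries k => y ^ p - y) ''
        {x : LaurentSeries k | ∀ i : ℤ, i < -((n / p : ℕ) : ℤ) → x.coeff i = 0} := by
  have key := neg_le_orderTop_pow_sub_self_iff (R := k) hp.one_lt n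
  ext x
  simp only [Set.mem_inter_iff, Set.mem_ofPred_eq, Set.mem_range, Set.mem_image,
    ← coe_le_orderTop_iff_forall]
  constructor
  · rintro ⟨hx, y, rfl⟩
    exact ⟨y, (key y).1 hx, rfl⟩
  · rintro ⟨y, hy, rfl⟩
    exact ⟨(key y).2 hy, y, rfl⟩

theorem stmt10 (p : ℕ) (hp : p.Prime) (k : Type*) [Field k] [Fintype k] [CharP k p]
    (n : ℕ) (hn : 0 < n) :
    {x : LaurentSeries k | ∀ i : ℤ, i < -(n : ℤ) → x.coeff i = 0} ∩
        Set.range (fun y : LaurentSeries k => y ^ p - y) =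
      (fun y : LaurentSeries k => y ^ p - y) ''
        {x : LaurentSeries k | ∀ i : ℤ, i < -((n / p : ℕ) : ℤ) → x.coeff i = 0} :=
  stmt10_general p hp k n
end

section
/- Let K be a local field of characteristic p with residue field k of degree f over F_p, and let ℘(x) = x^p − x. Denote by bar(𝔭^n) the image of 𝔭^n in K/℘(K). If m = pi > 0 is a multiple of p then bar(𝔭^{−pi+1}) = bar(𝔭^{−pi}), whereas if m > 0 is prime to p then bar(𝔭^{−m+1}) has F_p-codimension f in bar(𝔭^{−m}). In particular K/℘(K) has countably infinite dimension over F_p. -/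
/-!
For `x ∈ 𝔭` the partial sums `s_N = ∑_{j<N} x^{p^j}` converge coefficientwise and
`℘(s_N) = x^{p^N} - x`, so their limit `s` satisfies `℘(-s) = x`: thus `𝔭 ⊆ ℘(K)`.
A pole of order `e > 0` of `y` gives a pole of order `pe` of `℘(y)`, so for `p ∤ m` no element
of `𝔭^{-m+1} + ℘(K)` has a pole of order exactly `m`, and the coefficient of `t^{-m}` identifies
`bar(𝔭^{-m}) / bar(𝔭^{-m+1})` with `k`. For `m = pi`, `℘(c t^{-i}) = c^p t^{-pi} - c t^{-i}` and
perfectness of `k` remove the `t^{-pi}` term. As `bar(𝔭) = 0`, each `bar(𝔭^{-n})` is finite,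
while the classes of `t^{-(np+1)}` are pairwise distinct.
-/

/-- The fractional ideal `𝔭^{-n}` of the Laurent series field, as an additive
subgroup: series whose coefficients vanish in degrees `< -n`. -/
def fracIdeal (k : Type*) [Field k] (n : ℤ) : AddSubgroup (LaurentSeries k) where
  carrier := {x : LaurentSeries k | ∀ i : ℤ, i < -n → x.coeff i = 0}
  zero_mem' := by intro i _; exact HahnSeries.coeff_zero
  add_mem' := by
    intro a b ha hb i hi
    rw [HahnSeries.coeff_add, ha i hi, hb i hi, add_zero]
  neg_mem' := by
    intro a ha i hi
    rw [HahnSeries.coeff_neg, ha i hi, neg_zero]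

/-- The Artin–Schreier map `℘(x) = x^p - x` as an additive group homomorphism of
a commutative ring of characteristic `p`. -/
def artinSchreier (p : ℕ) [Fact p.Prime] (K : Type*) [CommRing K] [CharP K p] :
    K →+ K where
  toFun x := x ^ p - x
  map_zero' := by
    simp [zero_pow (Fact.out (p := p.Prime)).pos.ne']
  map_add' a b := by
    show (a + b) ^ p - (a + b) = (a ^ p - a) + (b ^ p - b)
    rw [add_pow_char]
    ring

open HahnSeries

section FracIdeal

variable {k : Type*} [Field k]

theorem mem_fracIdeal_iff_le_orderTop {n : ℤ} {x : LaurentSeries k} :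
    x ∈ fracIdeal k n ↔ ((-n : ℤ) : WithTop ℤ) ≤ x.orderTop := by
  rw [le_orderTop_iff_forall]
  simp only [WithTop.coe_lt_coe]
  rfl

theorem fracIdeal_mono : Monotone (fracIdeal k) :=
  fun _ _ h _ hx i hi => hx i (by omega)

theorem single_mem_fracIdeal (n : ℤ) (a : k) : single (-n) a ∈ fracIdeal k n :=
  fun _ hi => coeff_single_of_ne (by omega)

theorem pow_mem_fracIdeal {a : ℤ} {x : LaurentSeries k} (hx : x ∈ fracIdeal k a) (n : ℕ) :
    x ^ n ∈ fracIdeal k (n * a) := by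
  rw [mem_fracIdeal_iff_le_orderTop] at hx ⊢
  calc ((-(n * a) : ℤ) : WithTop ℤ) = n • ((-a : ℤ) : WithTop ℤ) := by
        rw [← WithTop.coe_nsmul, nsmul_eq_mul, mul_neg]
    _ ≤ n • x.orderTop := nsmul_le_nsmul_right hx n
    _ ≤ (x ^ n).orderTop := orderTop_nsmul_le_orderTop_pow

theorem sub_single_coeff_mem_fracIdeal {n : ℤ} {x : LaurentSeries k} (hx : x ∈ fracIdeal k n) :
    x - single (-n) (x.coeff (-n)) ∈ fracIdeal k (n - 1) := by
  intro i hi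
  rw [coeff_sub]
  rcases (show i < -n ∨ i = -n by omega) with hlt | rfl
  · rw [hx i hlt, coeff_single_of_ne hlt.ne, sub_zero]
  · rw [coeff_single_same, sub_self]

theorem exists_mem_fracIdeal (x : LaurentSeries k) : ∃ n : ℕ, x ∈ fracIdeal k n :=
  ⟨(-x.order).toNat, fun _ hi => coeff_eq_zero_of_lt_order (by omega)⟩

theorem eq_zero_of_forall_mem_fracIdeal {x : LaurentSeries k}
    (h : ∀ N : ℕ, x ∈ fracIdeal k (-N)) : x = 0 := by
  ext d
  exact h (d.toNat + 1) d (by omega)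

theorem exists_sub_mem_fracIdeal_of_sub_succ_mem {a : ℤ} {s : ℕ → LaurentSeries k}
    (hs : ∀ N, s N ∈ fracIdeal k a) (hsucc : ∀ N : ℕ, s (N + 1) - s N ∈ fracIdeal k (-(N + 1))) :
    ∃ y, ∀ N : ℕ, y - s N ∈ fracIdeal k (-(N + 1)) := by
  have hstab : ∀ M N : ℕ, M ≤ N → s N - s M ∈ fracIdeal k (-(M + 1)) := by
    intro M N hMN
    induction N, hMN using Nat.le_induction with
    | base => simp
    | succ N hMN ih =>
      rw [← sub_add_sub_cancel _ (s N)]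
      exact add_mem (fracIdeal_mono (by omega) (hsucc N)) ih
  let g : ℤ → k := fun d => (s d.toNat).coeff d
  have hg : BddBelow g.support := ⟨-a, fun d hd => not_lt.mp fun hlt => hd (hs _ d hlt)⟩
  refine ⟨ofSuppBddBelow g hg, fun N d hd => ?_⟩
  have hd' := hstab d.toNat N (by omega) d (by omega)
  rw [coeff_sub, sub_eq_zero] at hd' ⊢
  exact hd'.symm

end FracIdeal

theorem artinSchreier_apply {p : ℕ} [Fact p.Prime] {K : Type*} [CommRing K] [CharP K p] (x : K) :
    artinSchreier p K x = x ^ p - x := rfl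

instance LaurentSeries.charP (k : Type*) [Field k] (p : ℕ) [CharP k p] :
    CharP (LaurentSeries k) p :=
  charP_of_injective_algebraMap (algebraMap k (LaurentSeries k)).injective p

section ArtinSchreier

variable {p : ℕ} [Fact p.Prime] {k : Type*} [Field k] [CharP k p]

local notation "℘" => artinSchreier p (LaurentSeries k)

theorem artinSchreier_mem_fracIdeal {n : ℤ} (hn : n ≤ 0) {x : LaurentSeries k}
    (hx : x ∈ fracIdeal k n) : ℘ x ∈ fracIdeal k n := by
  have hp := (Fact.out : p.Prime).one_lt
  rw [artinSchreier_apply]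
  exact sub_mem (fracIdeal_mono (by nlinarith) (pow_mem_fracIdeal hx p)) hx

theorem orderTop_artinSchreier {y : LaurentSeries k} (hy : y.orderTop < 0) :
    (℘ y).orderTop = p • y.orderTop := by
  have hpow : ∀ n : ℕ, (y ^ n).orderTop = n • y.orderTop := fun n => by
    induction n with
    | zero => simp
    | succ n ih => rw [pow_succ, orderTop_mul, ih, succ_nsmul]
  obtain ⟨o, ho⟩ := WithTop.ne_top_iff_exists.mp hy.ne_top
  have hp := (Fact.out : p.Prime).one_lt
  have ho' : o < 0 := by rw [← ho] at hy; exact_mod_cast hy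
  have hlt : (y ^ p).orderTop < y.orderTop := by
    rw [hpow, ← ho, ← WithTop.coe_nsmul, WithTop.coe_lt_coe, nsmul_eq_mul]
    nlinarith
  rw [artinSchreier_apply, orderTop_sub hlt, hpow]

theorem coeff_artinSchreier_eq_zero {m : ℕ} (hm : 0 < m) (hpm : ¬ p ∣ m) {y : LaurentSeries k}
    (h : ℘ y ∈ fracIdeal k m) : (℘ y).coeff (-m) = 0 := by
  by_cases hy : y.orderTop < 0
  · obtain ⟨o, ho⟩ := WithTop.ne_top_iff_exists.mp hy.ne_top
    have hord : (℘ y).orderTop = ((p * o : ℤ) : WithTop ℤ) := by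
      rw [orderTop_artinSchreier hy, ← ho, ← WithTop.coe_nsmul, nsmul_eq_mul]
    have hle : -(m : ℤ) ≤ p * o := by
      rw [mem_fracIdeal_iff_le_orderTop, hord, WithTop.coe_le_coe] at h
      exact h
    have hne : -(m : ℤ) ≠ p * o := fun heq =>
      hpm (Int.natCast_dvd_natCast.mp ⟨-o, by linarith⟩)
    exact coeff_eq_zero_of_lt_orderTop (by rw [hord]; exact_mod_cast lt_of_le_of_ne hle hne)
  · have hy0 : y ∈ fracIdeal k 0 := mem_fracIdeal_iff_le_orderTop.mpr (by simpa using hy)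
    exact artinSchreier_mem_fracIdeal le_rfl hy0 _ (by omega)

theorem coeff_eq_zero_of_mem_sup_range {m : ℕ} (hm : 0 < m) (hpm : ¬ p ∣ m)
    {x : LaurentSeries k} (hx : x ∈ fracIdeal k m)
    (hxR : x ∈ fracIdeal k (m - 1) ⊔ (℘).range) : x.coeff (-m) = 0 := by
  obtain ⟨z, hz, _, ⟨y, rfl⟩, rfl⟩ := AddSubgroup.mem_sup.mp hxR
  have hy : ℘ y ∈ fracIdeal k m := by
    simpa using sub_mem hx (fracIdeal_mono (by omega) hz)
  rw [coeff_add, hz _ (by omega), coeff_artinSchreier_eq_zero hm hpm hy, add_zero]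

theorem fracIdeal_neg_one_le_range : fracIdeal k (-1) ≤ (℘).range := by
  intro x hx
  have hp := (Fact.out : p.Prime).one_lt
  let s : ℕ → LaurentSeries k := fun N => ∑ j ∈ Finset.range N, x ^ p ^ j
  have hterm : ∀ j : ℕ, x ^ p ^ j ∈ fracIdeal k (-(j + 1)) := fun j => by
    have hj : (j : ℤ) < (p ^ j : ℕ) := by exact_mod_cast Nat.lt_pow_self hp
    exact fracIdeal_mono (by omega) (pow_mem_fracIdeal hx (p ^ j))
  have hs : ∀ N, s N ∈ fracIdeal k (-1) := fun N =>
    sum_mem fun j _ => fracIdeal_mono (by omega) (hterm j)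
  have hsucc : ∀ N : ℕ, s (N + 1) - s N ∈ fracIdeal k (-(N + 1)) := fun N => by
    simpa [s, Finset.sum_range_succ] using hterm N
  have h℘s : ∀ N, ℘ (s N) = x ^ p ^ N - x := fun N => by
    simp only [s, artinSchreier_apply, sum_pow_char, ← Finset.sum_sub_distrib, ← pow_mul,
      ← pow_succ]
    rw [Finset.sum_range_sub (fun j => x ^ p ^ j), pow_zero, pow_one]
  obtain ⟨y, hy⟩ := exists_sub_mem_fracIdeal_of_sub_succ_mem hs hsucc
  refine ⟨-y, ?_⟩
  rw [map_neg, neg_eq_iff_add_eq_zero]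
  refine eq_zero_of_forall_mem_fracIdeal fun N => ?_
  have hsplit : ℘ y + x = ℘ (y - s N) + x ^ p ^ N := by
    rw [map_sub, h℘s]
    abel
  rw [hsplit]
  exact add_mem (artinSchreier_mem_fracIdeal (by omega) (fracIdeal_mono (by omega) (hy N)))
    (fracIdeal_mono (by omega) (hterm N))

theorem fracIdeal_mul_sub_one_sup_range [PerfectRing k p] {i : ℕ} (hi : 0 < i) :
    fracIdeal k (p * i - 1) ⊔ (℘).range = fracIdeal k (p * i) ⊔ (℘).range := by
  refine le_antisymm (sup_le_sup_right (fracIdeal_mono (by omega)) _) (sup_le ?_ le_sup_right)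
  intro x hx
  have hp := (Fact.out : p.Prime).one_lt
  obtain ⟨c, hc⟩ := surjective_frobenius k p (x.coeff (-(p * i)))
  have h℘ : ℘ (single (-(i : ℤ)) c) =
      single (-((p : ℤ) * i)) (x.coeff (-(p * i))) - single (-(i : ℤ)) c := by
    rw [artinSchreier_apply, single_pow, ← hc, frobenius_def, nsmul_eq_mul, mul_neg]
  have hrest : x - ℘ (single (-(i : ℤ)) c) ∈ fracIdeal k (p * i - 1) := by
    rw [h℘, sub_sub_eq_add_sub, add_sub_right_comm]
    exact add_mem (sub_single_coeff_mem_fracIdeal hx)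
      (fracIdeal_mono (by nlinarith) (single_mem_fracIdeal i c))
  have hR : ℘ (single (-(i : ℤ)) c) ∈ (℘).range := ⟨_, rfl⟩
  simpa using add_mem (AddSubgroup.mem_sup_left hrest) (AddSubgroup.mem_sup_right hR)

theorem relIndex_fracIdeal_sub_one_sup_range {m : ℕ} (hm : 0 < m) (hpm : ¬ p ∣ m) :
    (fracIdeal k (m - 1) ⊔ (℘).range).relIndex (fracIdeal k m ⊔ (℘).range) = Nat.card k := by
  set H := fracIdeal k (m - 1) ⊔ (℘).range
  have hsup : fracIdeal k m ⊔ (℘).range = fracIdeal k m ⊔ H := by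
    rw [← sup_assoc, sup_eq_left.mpr (fracIdeal_mono (by omega))]
  let φ : fracIdeal k m →+ k :=
    { toFun x := (x : LaurentSeries k).coeff (-m)
      map_zero' := rfl
      map_add' _ _ := rfl }
  have hsurj : Function.Surjective φ := fun a =>
    ⟨⟨_, single_mem_fracIdeal m a⟩, coeff_single_same _ _⟩
  have hker : φ.ker = H.addSubgroupOf (fracIdeal k m) := by
    ext x
    rw [AddMonoidHom.mem_ker, AddSubgroup.mem_addSubgroupOf]
    refine ⟨fun h0 => AddSubgroup.mem_sup_left ?_, coeff_eq_zero_of_mem_sup_range hm hpm x.2⟩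
    have h0' : (x : LaurentSeries k).coeff (-m) = 0 := h0
    simpa [h0'] using sub_single_coeff_mem_fracIdeal x.2
  rw [hsup, AddSubgroup.relIndex_sup_right, AddSubgroup.relIndex, ← hker, AddSubgroup.index_ker,
    AddMonoidHom.range_eq_top.mpr hsurj, AddSubgroup.card_top]

theorem finite_image_mk_fracIdeal [Finite k] (n : ℕ) :
    (QuotientAddGroup.mk' (℘).range '' fracIdeal k (n - 1)).Finite := by
  induction n with
  | zero =>
    refine (Set.finite_singleton 0).subset ?_
    rintro _ ⟨x, hx, rfl⟩
    simpa using fracIdeal_neg_one_le_range (by simpa using hx)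
  | succ n ih =>
    refine ((Set.finite_range fun a => QuotientAddGroup.mk' (℘).range (single (-(n : ℤ)) a)).image2
      (· + ·) ih).subset ?_
    rintro _ ⟨x, hx, rfl⟩
    have hx' : x ∈ fracIdeal k n := by simpa using hx
    refine ⟨_, ⟨x.coeff (-n), rfl⟩, _, ⟨_, sub_single_coeff_mem_fracIdeal hx', rfl⟩, ?_⟩
    dsimp only
    rw [← map_add, add_sub_cancel]

theorem countable_quotient_range [Finite k] : Countable (LaurentSeries k ⧸ (℘).range) := by
  refine Set.countable_univ_iff.mp
    ((Set.countable_iUnion fun n => (finite_image_mk_fracIdeal n).countable).mono ?_)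
  rintro q -
  obtain ⟨x, rfl⟩ := QuotientAddGroup.mk'_surjective _ q
  obtain ⟨n, hn⟩ := exists_mem_fracIdeal x
  exact Set.mem_iUnion.mpr ⟨n + 1, x, by simpa using hn, rfl⟩

theorem mk_single_ne_mk_single {a b : ℕ} (hab : a < b) :
    (QuotientAddGroup.mk (single (-((a * p + 1 : ℕ) : ℤ)) (1 : k)) :
        LaurentSeries k ⧸ (℘).range) ≠
      QuotientAddGroup.mk (single (-((b * p + 1 : ℕ) : ℤ)) (1 : k)) := by
  intro h
  have hmem := (QuotientAddGroup.eq_iff_sub_mem).mp h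
  have hlt : a * p + 1 < b * p + 1 := by have := (Fact.out : p.Prime).pos; gcongr
  have hpm : ¬ p ∣ b * p + 1 := fun hd =>
    (Fact.out : p.Prime).one_lt.ne' (Nat.dvd_one.mp ((Nat.dvd_add_right ⟨b, by ring⟩).mp hd))
  have hne : -((b * p + 1 : ℕ) : ℤ) ≠ -((a * p + 1 : ℕ) : ℤ) := by
    rw [ne_eq, neg_inj, Nat.cast_inj]
    exact hlt.ne'
  have hcoeff := coeff_eq_zero_of_mem_sup_range (by omega) hpm
    (sub_mem (fracIdeal_mono (by exact_mod_cast hlt.le) (single_mem_fracIdeal _ 1))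
      (single_mem_fracIdeal _ 1))
    (AddSubgroup.mem_sup_right hmem)
  rw [coeff_sub, coeff_single_same, coeff_single_of_ne hne] at hcoeff
  simp at hcoeff

theorem infinite_quotient_range : Infinite (LaurentSeries k ⧸ (℘).range) := by
  refine Infinite.of_injective (fun n : ℕ => (QuotientAddGroup.mk
    (single (-((n * p + 1 : ℕ) : ℤ)) (1 : k)) : LaurentSeries k ⧸ (℘).range)) fun a b h => ?_
  by_contra hne
  rcases Nat.lt_or_gt_of_ne hne with hlt | hlt
  exacts [mk_single_ne_mk_single hlt h, mk_single_ne_mk_single hlt h.symm]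

end ArtinSchreier

theorem stmt11 (p : ℕ) [Fact p.Prime] (k : Type*) [Field k] [Fintype k] [CharP k p]
    (f : ℕ) (hf : Fintype.card k = p ^ f) :
    letI : CharP (LaurentSeries k) p :=
      charP_of_injective_algebraMap (algebraMap k (LaurentSeries k)).injective p
    ∀ R : AddSubgroup (LaurentSeries k), R = (artinSchreier p (LaurentSeries k)).range →
      ((∀ i : ℕ, 0 < i →
          fracIdeal k ((p : ℤ) * i - 1) ⊔ R = fracIdeal k ((p : ℤ) * i) ⊔ R) ∧
        (∀ m : ℕ, 0 < m → ¬ p ∣ m →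
          AddSubgroup.relIndex (fracIdeal k ((m : ℤ) - 1) ⊔ R) (fracIdeal k (m : ℤ) ⊔ R)
            = p ^ f) ∧
        Countable (LaurentSeries k ⧸ R) ∧ Infinite (LaurentSeries k ⧸ R)) := by
  rintro R rfl
  refine ⟨fun i hi => fracIdeal_mul_sub_one_sup_range hi, fun m hm hpm => ?_,
    countable_quotient_range, infinite_quotient_range⟩
  rw [relIndex_fracIdeal_sub_one_sup_range hm hpm, Nat.card_eq_fintype_card, hf]
end

section
/- Let K be a local field of characteristic p with uniformiser π, let m > 0 be prime to p, let a ∈ K with v_K(a) = −m, and let α be a root of T^p − T − a. If x, y ∈ Z satisfy −mx + py = 1, then α^x π^y is a uniformiser of L = K(α), and o_L = o_K[α^x π^y]. -/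
/-!
In `α ^ p - α = a` the term `α ^ p` dominates, so `w α = w a / p = -m` and `w t = -m x + p y = 1`.
For `0 ≤ i < p` the values `w (c t ^ i) = p v(c) + i` lie in distinct classes mod `p`, so no
cancellation can occur in `∑ cᵢ tⁱ`: its value is the least value of its terms. Hence
`1, t, …, t ^ (p - 1)` are linearly independent, thus a basis since `[L : K] ≤ p`, and
`∑ cᵢ tⁱ` is integral exactly when every `cᵢ` is.
-/

open IntermediateField

/-- The value `w 0` is unconstrained. -/
structure IsIntValuation {L : Type*} [Field L] (w : L → ℤ) : Prop where
  map_mul : ∀ u v : L, u ≠ 0 → v ≠ 0 → w (u * v) = w u + w v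
  min_le_map_add : ∀ u v : L, u ≠ 0 → v ≠ 0 → u + v ≠ 0 → min (w u) (w v) ≤ w (u + v)

namespace IsIntValuation

variable {L : Type*} [Field L] {w : L → ℤ} (hw : IsIntValuation w)
include hw

theorem map_one : w 1 = 0 := by
  have h := hw.map_mul 1 1 one_ne_zero one_ne_zero
  rw [mul_one] at h
  omega

theorem map_neg {u : L} (hu : u ≠ 0) : w (-u) = w u := by
  have h1 := hw.map_mul (-1) (-1) (by simp) (by simp)
  have h2 := hw.map_mul (-1) u (by simp) hu
  rw [neg_mul_neg, one_mul, hw.map_one] at h1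
  rw [neg_one_mul] at h2
  omega

theorem map_inv {u : L} (hu : u ≠ 0) : w u⁻¹ = -w u := by
  have h := hw.map_mul u u⁻¹ hu (inv_ne_zero hu)
  rw [mul_inv_cancel₀ hu, hw.map_one] at h
  omega

theorem map_pow {u : L} (hu : u ≠ 0) (n : ℕ) : w (u ^ n) = n * w u := by
  induction n with
  | zero => simp [hw.map_one]
  | succ n ih =>
    rw [pow_succ, hw.map_mul _ _ (pow_ne_zero _ hu) hu, ih]
    push_cast
    ring

theorem map_zpow {u : L} (hu : u ≠ 0) (n : ℤ) : w (u ^ n) = n * w u := by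
  cases n with
  | ofNat n => simpa using hw.map_pow hu n
  | negSucc n =>
    rw [zpow_negSucc, hw.map_inv (pow_ne_zero _ hu), hw.map_pow hu, Int.negSucc_eq]
    push_cast
    ring

theorem add_ne_zero_of_lt {u v : L} (hu : u ≠ 0) (h : w u < w v) : u + v ≠ 0 := by
  intro huv
  rw [eq_neg_of_add_eq_zero_right huv, hw.map_neg hu] at h
  exact h.false

theorem map_add_eq_of_lt_left {u v : L} (hu : u ≠ 0) (hv : v ≠ 0) (h : w u < w v) :
    w (u + v) = w u := by
  have huv := hw.add_ne_zero_of_lt hu h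
  refine le_antisymm ?_ (min_eq_left h.le ▸ hw.min_le_map_add u v hu hv huv)
  have h' := hw.min_le_map_add (u + v) (-v) huv (neg_ne_zero.2 hv) (by simpa using hu)
  rw [add_neg_cancel_right, hw.map_neg hv] at h'
  omega

theorem sum_ne_zero_and_map_sum_eq {ι : Type*} {s : Finset ι} (hs : s.Nonempty) {f : ι → L}
    (hf : ∀ i ∈ s, f i ≠ 0) (hinj : Set.InjOn (w ∘ f) s) :
    (∑ i ∈ s, f i) ≠ 0 ∧ w (∑ i ∈ s, f i) = s.inf' hs (w ∘ f) := by
  induction hs using Finset.Nonempty.cons_induction with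
  | singleton a => simpa using hf a (by simp)
  | cons a s ha hs ih =>
    obtain ⟨hS, hwS⟩ := ih (fun i hi ↦ hf i (by simp [hi])) (hinj.mono (by simp))
    have hfa : f a ≠ 0 := hf a (by simp)
    have hne : w (f a) ≠ w (∑ i ∈ s, f i) := by
      obtain ⟨i, hi, hwi⟩ := s.exists_mem_eq_inf' hs (w ∘ f)
      rw [hwS, hwi]
      exact fun h ↦ ha (hinj (by simp) (by simp [hi]) h ▸ hi)
    rw [Finset.sum_cons, Finset.inf'_cons hs, ← hwS]
    rcases hne.lt_or_gt with hlt | hlt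
    · exact ⟨hw.add_ne_zero_of_lt hfa hlt, by
        rw [hw.map_add_eq_of_lt_left hfa hS hlt]; exact (min_eq_left hlt.le).symm⟩
    · rw [add_comm]
      exact ⟨hw.add_ne_zero_of_lt hS hlt, by
        rw [hw.map_add_eq_of_lt_left hS hfa hlt]; exact (min_eq_right hlt.le).symm⟩

theorem map_pow_sub_self {p : ℕ} (hp : 1 < p) {e : L} (he : e ^ p - e ≠ 0)
    (hneg : w (e ^ p - e) < 0) : w (e ^ p - e) = p * w e := by
  have he0 : e ≠ 0 := by rintro rfl; simp [zero_pow (by omega : p ≠ 0)] at he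
  rw [sub_eq_add_neg] at he hneg ⊢
  have hwe : w e < 0 := by
    by_contra! hwe
    have := hw.min_le_map_add _ _ (pow_ne_zero p he0) (neg_ne_zero.2 he0) he
    rw [hw.map_neg he0, hw.map_pow he0] at this
    have : 0 ≤ (p : ℤ) * w e := by positivity
    omega
  have hlt : w (e ^ p) < w (-e) := by
    rw [hw.map_neg he0, hw.map_pow he0]
    nlinarith
  rw [hw.map_add_eq_of_lt_left (pow_ne_zero p he0) (neg_ne_zero.2 he0) hlt, hw.map_pow he0]

def integers : Subring L where
  carrier := {z | z = 0 ∨ 0 ≤ w z}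
  zero_mem' := Or.inl rfl
  one_mem' := Or.inr hw.map_one.ge
  neg_mem' := by
    rintro u (rfl | hu)
    · simp
    rcases eq_or_ne u 0 with rfl | hu0
    · simp
    exact Or.inr (hw.map_neg hu0 ▸ hu)
  add_mem' := by
    rintro u v (rfl | hu) (rfl | hv)
    · simp
    · simpa using Or.inr hv
    · simpa using Or.inr hu
    rcases eq_or_ne u 0 with rfl | hu0
    · simpa using Or.inr hv
    rcases eq_or_ne v 0 with rfl | hv0
    · simpa using Or.inr hu
    refine or_iff_not_imp_left.2 fun huv ↦ ?_
    exact (le_min hu hv).trans (hw.min_le_map_add u v hu0 hv0 huv)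
  mul_mem' := by
    rintro u v (rfl | hu) (rfl | hv)
    · simp
    · simp
    · simp
    rcases eq_or_ne u 0 with rfl | hu0
    · simp
    rcases eq_or_ne v 0 with rfl | hv0
    · simp
    exact Or.inr (hw.map_mul u v hu0 hv0 ▸ add_nonneg hu hv)

end IsIntValuation

section PowersOfUniformizer

variable {K L : Type*} [Field K] [Field L] [Algebra K L] {w : L → ℤ} (hw : IsIntValuation w)
  {vK : K → ℤ} {n : ℕ} (hext : ∀ c : K, c ≠ 0 → w (algebraMap K L c) = n * vK c)
  {t : L} (ht0 : t ≠ 0) (ht : w t = 1)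
include hw hext ht0 ht

theorem IsIntValuation.map_smul_pow {c : K} (hc : c ≠ 0) (i : ℕ) :
    w (c • t ^ i) = n * vK c + i := by
  rw [Algebra.smul_def, hw.map_mul _ _ (by simpa using hc) (pow_ne_zero _ ht0), hext c hc,
    hw.map_pow ht0, ht, mul_one]

theorem IsIntValuation.injOn_map_smul_pow (g : Fin n → K) :
    Set.InjOn (fun i : Fin n ↦ w (g i • t ^ (i : ℕ))) {i | g i ≠ 0} := by
  intro i hi j hj hij
  simp only [hw.map_smul_pow hext ht0 ht hi, hw.map_smul_pow hext ht0 ht hj] at hij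
  have hdvd : (n : ℤ) ∣ (i : ℕ) - (j : ℕ) := ⟨vK (g j) - vK (g i), by linear_combination hij⟩
  have hlt : |((i : ℕ) : ℤ) - (j : ℕ)| < n := by
    rw [abs_lt]; constructor <;> linarith [i.2, j.2]
  exact Fin.ext (by exact_mod_cast sub_eq_zero.1 (Int.eq_zero_of_abs_lt_dvd hdvd hlt))

theorem IsIntValuation.sum_smul_pow_ne_zero_and_map_le (g : Fin n → K) {i : Fin n}
    (hi : g i ≠ 0) :
    (∑ j, g j • t ^ (j : ℕ)) ≠ 0 ∧ w (∑ j, g j • t ^ (j : ℕ)) ≤ w (g i • t ^ (i : ℕ)) := by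
  classical
  set s := Finset.univ.filter fun j ↦ g j • t ^ (j : ℕ) ≠ 0
  have hmem : ∀ {j}, j ∈ s ↔ g j ≠ 0 := by simp [s, ht0]
  have hs : s.Nonempty := ⟨i, hmem.2 hi⟩
  obtain ⟨hS, hwS⟩ := hw.sum_ne_zero_and_map_sum_eq hs (by simp [s])
    ((hw.injOn_map_smul_pow hext ht0 ht g).mono fun j hj ↦ hmem.1 hj)
  rw [Finset.sum_filter_ne_zero] at hS hwS
  exact ⟨hS, hwS ▸ Finset.inf'_le _ (hmem.2 hi)⟩

theorem IsIntValuation.linearIndependent_pow :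
    LinearIndependent K (fun i : Fin n ↦ t ^ (i : ℕ)) := by
  refine Fintype.linearIndependent_iff.2 fun g hg i ↦ ?_
  by_contra hi
  exact (hw.sum_smul_pow_ne_zero_and_map_le hext ht0 ht g hi).1 hg

theorem IsIntValuation.exists_sum_smul_pow_eq [FiniteDimensional K L]
    (hn : Module.finrank K L ≤ n) {z : L} (hz : 0 ≤ w z) :
    ∃ g : Fin n → K, (∀ i, g i ≠ 0 → 0 ≤ vK (g i)) ∧ ∑ i, g i • t ^ (i : ℕ) = z := by
  have hli := hw.linearIndependent_pow hext ht0 ht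
  have hspan := hli.span_eq_top_of_card_eq_finrank'
    (by simpa using le_antisymm hli.fintype_card_le_finrank (by simpa using hn))
  obtain ⟨g, hg⟩ := (Submodule.mem_span_range_iff_exists_fun K).1 (hspan ▸ Submodule.mem_top)
  refine ⟨g, fun i hi ↦ ?_, hg⟩
  have := (hw.sum_smul_pow_ne_zero_and_map_le hext ht0 ht g hi).2
  rw [hg, hw.map_smul_pow hext ht0 ht hi] at this
  have : ((i : ℕ) : ℤ) < n := by exact_mod_cast i.2
  by_contra! hneg
  nlinarith

end PowersOfUniformizer

theorem IntermediateField.finrank_adjoin_simple_le {K L : Type*} [Field K] [Field L]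
    [Algebra K L] {x : L} {f : Polynomial K} (hf : f.Monic) (hx : Polynomial.aeval x f = 0) :
    Module.finrank K K⟮x⟯ ≤ f.natDegree := by
  rw [adjoin.finrank ⟨f, hf, hx⟩]
  exact Polynomial.natDegree_le_natDegree (minpoly.degree_le_of_ne_zero K x hf.ne_zero hx)

namespace Polynomial

theorem monic_X_pow_sub_X_sub_C {K : Type*} [Field K] {p : ℕ} (hp : 1 < p) (a : K) :
    (X ^ p - X - C a).Monic := by
  rw [sub_sub]
  exact monic_X_pow_sub (by rw [degree_X_add_C]; exact_mod_cast hp)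

theorem natDegree_X_pow_sub_X_sub_C {K : Type*} [Field K] {p : ℕ} (hp : 1 < p) (a : K) :
    (X ^ p - X - C a).natDegree = p := by
  rw [sub_sub, natDegree_sub_eq_left_of_natDegree_lt] <;> simp [hp]

end Polynomial

section ArtinSchreier

variable {K L : Type*} [Field K] [Field L] [Algebra K L] {p : ℕ} (hp : 1 < p) {a : K} {α : L}
  (hα : α ^ p - α = algebraMap K L a)
include hp hα

theorem isIntegral_of_pow_sub_self_eq : IsIntegral K α :=
  ⟨_, Polynomial.monic_X_pow_sub_X_sub_C hp a, by simp [hα]⟩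

theorem finrank_adjoin_le_of_pow_sub_self_eq : Module.finrank K K⟮α⟯ ≤ p :=
  Polynomial.natDegree_X_pow_sub_X_sub_C hp a ▸
    finrank_adjoin_simple_le (Polynomial.monic_X_pow_sub_X_sub_C hp a) (by simp [hα])

end ArtinSchreier

theorem LaurentSeries.order_nonneg_iff_exists_algebraMap {k : Type*} [Field k]
    (f : LaurentSeries k) :
    0 ≤ f.order ↔ ∃ g : PowerSeries k, algebraMap (PowerSeries k) (LaurentSeries k) g = f := by
  constructor
  · intro hf
    exact ⟨PowerSeries.X ^ f.order.toNat * f.powerSeriesPart,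
      LaurentSeries.X_order_mul_powerSeriesPart (Int.toNat_of_nonneg hf)⟩
  · rintro ⟨g, rfl⟩
    by_contra! hneg
    have hne : (g : LaurentSeries k) ≠ 0 := by
      rintro h
      simp [h] at hneg
    exact hne (HahnSeries.coeff_order_eq_zero.1
      (by rw [PowerSeries.coeff_coe]; exact if_pos hneg))

section LaurentSeries

variable {k L : Type*} [Field k] [Field L] [Algebra (LaurentSeries k) L]
  [Algebra (PowerSeries k) L] [IsScalarTower (PowerSeries k) (LaurentSeries k) L]
  {w : L → ℤ} (hw : IsIntValuation w) {n : ℕ}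
  (hext : ∀ c : LaurentSeries k, c ≠ 0 → w (algebraMap (LaurentSeries k) L c) = n * c.order)
include hw hext

theorem IsIntValuation.adjoin_subset_integers {t : L} (ht : 0 ≤ w t) :
    (Algebra.adjoin (PowerSeries k) {t} : Set L) ⊆ hw.integers := by
  intro z hz
  induction hz using Algebra.adjoin_induction with
  | mem u hu => exact Or.inr (Set.mem_singleton_iff.1 hu ▸ ht)
  | algebraMap r =>
    rcases eq_or_ne r 0 with rfl | hr
    · exact Or.inl (map_zero _)
    have hr' : algebraMap (PowerSeries k) (LaurentSeries k) r ≠ 0 :=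
      (map_ne_zero_iff _ HahnSeries.ofPowerSeries_injective).2 hr
    refine Or.inr ?_
    rw [IsScalarTower.algebraMap_apply (PowerSeries k) (LaurentSeries k), hext _ hr']
    exact mul_nonneg (by positivity)
      ((LaurentSeries.order_nonneg_iff_exists_algebraMap _).2 ⟨r, rfl⟩)
  | add _ _ _ _ hu hv => exact hw.integers.add_mem hu hv
  | mul _ _ _ _ hu hv => exact hw.integers.mul_mem hu hv

theorem IsIntValuation.integers_subset_adjoin [FiniteDimensional (LaurentSeries k) L]
    (hn : Module.finrank (LaurentSeries k) L ≤ n) {t : L} (ht0 : t ≠ 0) (ht : w t = 1) :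
    (hw.integers : Set L) ⊆ Algebra.adjoin (PowerSeries k) {t} := by
  rintro z (rfl | hz)
  · exact zero_mem _
  obtain ⟨g, hg, rfl⟩ := hw.exists_sum_smul_pow_eq hext ht0 ht hn hz
  refine Subalgebra.sum_mem _ fun i _ ↦ ?_
  by_cases hi : g i = 0
  · simp [hi]
  obtain ⟨c, hc⟩ := (LaurentSeries.order_nonneg_iff_exists_algebraMap _).1 (hg i hi)
  rw [← hc, algebraMap_smul]
  exact Subalgebra.smul_mem _ (pow_mem (Algebra.self_mem_adjoin_singleton _ t) _) c

theorem IsIntValuation.integers_eq_adjoin [FiniteDimensional (LaurentSeries k) L]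
    (hn : Module.finrank (LaurentSeries k) L ≤ n) {t : L} (ht0 : t ≠ 0) (ht : w t = 1) :
    (hw.integers : Set L) = Algebra.adjoin (PowerSeries k) {t} :=
  (hw.integers_subset_adjoin hext hn ht0 ht).antisymm
    (hw.adjoin_subset_integers hext (ht ▸ zero_le_one))

end LaurentSeries

theorem stmt14_general (p : ℕ) [Fact p.Prime] (k : Type*) [Field k]
    (m : ℕ) (hm : 0 < m)
    (π : LaurentSeries k) (hπ0 : π ≠ 0) (hπ : π.order = 1)
    (a : LaurentSeries k) (ha0 : a ≠ 0) (ha : a.order = -(m : ℤ))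
    (α : AlgebraicClosure (LaurentSeries k))
    (hα : α ^ p - α = algebraMap (LaurentSeries k) (AlgebraicClosure (LaurentSeries k)) a)
    (w : (LaurentSeries k)⟮α⟯ → ℤ)
    (hw_mul : ∀ u v : (LaurentSeries k)⟮α⟯, u ≠ 0 → v ≠ 0 → w (u * v) = w u + w v)
    (hw_add : ∀ u v : (LaurentSeries k)⟮α⟯, u ≠ 0 → v ≠ 0 → u + v ≠ 0 →
      min (w u) (w v) ≤ w (u + v))
    (hw_ext : ∀ z : LaurentSeries k, z ≠ 0 →
      w (algebraMap (LaurentSeries k) (LaurentSeries k)⟮α⟯ z) = p * z.order)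
    (x y : ℤ) (hxy : -(m : ℤ) * x + p * y = 1) :
    letI : Algebra (PowerSeries k) (LaurentSeries k)⟮α⟯ :=
      ((algebraMap (LaurentSeries k) (LaurentSeries k)⟮α⟯).comp
        (algebraMap (PowerSeries k) (LaurentSeries k))).toAlgebra
    ∀ t : (LaurentSeries k)⟮α⟯,
      t = (AdjoinSimple.gen (LaurentSeries k) α) ^ x *
          (algebraMap (LaurentSeries k) (LaurentSeries k)⟮α⟯ π) ^ y →
      w t = 1 ∧
        {z : (LaurentSeries k)⟮α⟯ | z = 0 ∨ 0 ≤ w z} =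
          (Algebra.adjoin (PowerSeries k) {t} :
            Subalgebra (PowerSeries k) (LaurentSeries k)⟮α⟯) := by
  let : Algebra (PowerSeries k) (LaurentSeries k)⟮α⟯ :=
    ((algebraMap (LaurentSeries k) (LaurentSeries k)⟮α⟯).comp
      (algebraMap (PowerSeries k) (LaurentSeries k))).toAlgebra
  have : IsScalarTower (PowerSeries k) (LaurentSeries k) (LaurentSeries k)⟮α⟯ :=
    .of_algebraMap_eq fun _ ↦ rfl
  have hp : 1 < p := (Fact.out : p.Prime).one_lt
  have := adjoin.finiteDimensional (isIntegral_of_pow_sub_self_eq hp hα)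
  intro t ht
  set e := AdjoinSimple.gen (LaurentSeries k) α
  have hw : IsIntValuation w := ⟨hw_mul, hw_add⟩
  have heq : e ^ p - e = algebraMap _ _ a := Subtype.ext hα
  have hwa : w (e ^ p - e) = p * -(m : ℤ) := by rw [heq, hw_ext a ha0, ha]
  have hane : algebraMap (LaurentSeries k) (LaurentSeries k)⟮α⟯ a ≠ 0 := by simpa using ha0
  have he0 : e ≠ 0 := by
    rintro h
    simp [h, zero_pow (by omega : p ≠ 0), hane.symm] at heq
  have hwe : w e = -m := by
    have := hw.map_pow_sub_self hp (heq ▸ hane) (by rw [hwa]; nlinarith)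
    exact (mul_left_cancel₀ (by omega) (hwa ▸ this)).symm
  have hπ' : algebraMap (LaurentSeries k) (LaurentSeries k)⟮α⟯ π ≠ 0 := by simpa using hπ0
  have ht0 : t ≠ 0 := ht ▸ mul_ne_zero (zpow_ne_zero x he0) (zpow_ne_zero y hπ')
  replace ht : w t = 1 := by
    rw [ht, hw_mul _ _ (zpow_ne_zero x he0) (zpow_ne_zero y hπ'), hw.map_zpow he0,
      hw.map_zpow hπ', hwe, hw_ext π hπ0, hπ]
    linarith
  exact ⟨ht, hw.integers_eq_adjoin hw_ext (finrank_adjoin_le_of_pow_sub_self_eq hp hα) ht0 ht⟩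

theorem stmt14 (p : ℕ) [Fact p.Prime] (k : Type*) [Field k] [Fintype k] [CharP k p]
    (m : ℕ) (hm : 0 < m) (hmp : ¬ p ∣ m)
    (π : LaurentSeries k) (hπ0 : π ≠ 0) (hπ : π.order = 1)
    (a : LaurentSeries k) (ha0 : a ≠ 0) (ha : a.order = -(m : ℤ))
    (α : AlgebraicClosure (LaurentSeries k))
    (hα : α ^ p - α = algebraMap (LaurentSeries k) (AlgebraicClosure (LaurentSeries k)) a)
    (w : (LaurentSeries k)⟮α⟯ → ℤ)
    (hw_mul : ∀ u v : (LaurentSeries k)⟮α⟯, u ≠ 0 → v ≠ 0 → w (u * v) = w u + w v)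
    (hw_add : ∀ u v : (LaurentSeries k)⟮α⟯, u ≠ 0 → v ≠ 0 → u + v ≠ 0 →
      min (w u) (w v) ≤ w (u + v))
    (hw_ext : ∀ z : LaurentSeries k, z ≠ 0 →
      w (algebraMap (LaurentSeries k) (LaurentSeries k)⟮α⟯ z) = p * z.order)
    (x y : ℤ) (hxy : -(m : ℤ) * x + p * y = 1) :
    letI : Algebra (PowerSeries k) (LaurentSeries k)⟮α⟯ :=
      ((algebraMap (LaurentSeries k) (LaurentSeries k)⟮α⟯).comp
        (algebraMap (PowerSeries k) (LaurentSeries k))).toAlgebra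
    ∀ t : (LaurentSeries k)⟮α⟯,
      t = (AdjoinSimple.gen (LaurentSeries k) α) ^ x *
          (algebraMap (LaurentSeries k) (LaurentSeries k)⟮α⟯ π) ^ y →
      w t = 1 ∧
        {z : (LaurentSeries k)⟮α⟯ | z = 0 ∨ 0 ≤ w z} =
          (Algebra.adjoin (PowerSeries k) {t} :
            Subalgebra (PowerSeries k) (LaurentSeries k)⟮α⟯) :=
  stmt14_general p k m hm π hπ0 hπ a ha0 ha α hα w hw_mul hw_add hw_ext x y hxy
end
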